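/- If dim π_μ ≤ C·n^k for a partition μ of n and d = max(length of first row of μ, length of first column of μ) satisfies n − d ≤ K for some constant K and all large n, then in fact d ≥ n − k for all sufficiently large n. -/

import Mathlib

/-- The hook length of the cell `c = (i, j)` (0-indexed) of a Young diagram `μ`. -/
def YoungDiagram.hookLength (μ : YoungDiagram) (c : ℕ × ℕ) : ℕ :=
  (μ.rowLen c.1 - c.2) + (μ.colLen c.2 - c.1) - 1

/-- Hook length formula dimension of the irreducible representation `π_μ` of `S_{|μ|}`. -/
def YoungDiagram.dimIrrep (μ : YoungDiagram) : ℕ :=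
  (Nat.factorial μ.card) / ∏ c ∈ μ.cells, μ.hookLength c

namespace YoungDiagram

lemma hookLength_transpose (μ : YoungDiagram) (c : ℕ × ℕ) :
    μ.transpose.hookLength c = μ.hookLength c.swap := by
  simp [hookLength, rowLen_transpose, colLen_transpose, Prod.swap]
  ring_nf

lemma cells_transpose_prod (μ : YoungDiagram) (f : ℕ × ℕ → ℕ) :
    ∏ c ∈ μ.transpose.cells, f c = ∏ c ∈ μ.cells, f c.swap := by
  apply Finset.prod_nbij' Prod.swap Prod.swap <;>
    simp [mem_cells, mem_transpose]

lemma card_transpose (μ : YoungDiagram) : μ.transpose.card = μ.card := by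
  apply Finset.card_nbij' Prod.swap Prod.swap <;>
    simp [Set.MapsTo, Set.LeftInvOn, Set.RightInvOn, Set.EqOn, mem_cells, mem_transpose]

lemma dimIrrep_transpose (μ : YoungDiagram) : μ.transpose.dimIrrep = μ.dimIrrep := by
  unfold dimIrrep
  rw [card_transpose]
  congr 1
  rw [cells_transpose_prod μ (μ.transpose.hookLength)]
  simp [hookLength_transpose]


lemma row_subset_cells (μ : YoungDiagram) (i : ℕ) : μ.row i ⊆ μ.cells :=
  Finset.filter_subset _ _

lemma rowLen_le_card (μ : YoungDiagram) (i : ℕ) : μ.rowLen i ≤ μ.card := by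
  rw [rowLen_eq_card]
  exact Finset.card_le_card (μ.row_subset_cells i)

lemma rowLen_add_rowLen_le (μ : YoungDiagram) : μ.rowLen 0 + μ.rowLen 1 ≤ μ.card := by
  rw [rowLen_eq_card, rowLen_eq_card]
  rw [← Finset.card_union_of_disjoint]
  · exact Finset.card_le_card (Finset.union_subset (μ.row_subset_cells 0) (μ.row_subset_cells 1))
  · rw [Finset.disjoint_left]
    intro a h0 h1
    rw [mem_row_iff] at h0 h1
    omega

lemma rowLen_add_colLen_le (μ : YoungDiagram) : μ.rowLen 0 + (μ.colLen 0 - 1) ≤ μ.card := by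
  rcases Nat.eq_zero_or_pos (μ.colLen 0) with h | h
  · simpa [h] using μ.rowLen_le_card 0
  · have h00 : ((0, 0) : ℕ × ℕ) ∈ μ.col 0 := by
      rw [mk_mem_col_iff, mem_iff_lt_colLen]; exact h
    rw [rowLen_eq_card, colLen_eq_card, ← Finset.card_erase_of_mem h00,
      ← Finset.card_union_of_disjoint]
    · refine Finset.card_le_card (Finset.union_subset (μ.row_subset_cells 0) ?_)
      exact (Finset.erase_subset _ _).trans (Finset.filter_subset _ _)
    · rw [Finset.disjoint_left]
      intro a h0 h1
      rw [mem_row_iff] at h0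
      rw [Finset.mem_erase, mem_col_iff] at h1
      exact h1.1 (Prod.ext h0.2 h1.2.2)


lemma prod_sub_eq_factorial (t : ℕ) : ∏ i ∈ Finset.range t, (t - i) = t.factorial := by
  induction t with
  | zero => simp
  | succ n ih =>
    calc ∏ i ∈ Finset.range (n + 1), (n + 1 - i)
        = (∏ i ∈ Finset.range n, (n + 1 - (i + 1))) * (n + 1 - 0) :=
          Finset.prod_range_succ' _ _
      _ = n.factorial * (n + 1) := by
          rw [← ih]
          congr 1
          exact Finset.prod_congr rfl fun i _ => by omega
      _ = (n + 1).factorial := by rw [Nat.factorial_succ]; ring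

lemma prod_hook_le (μ : YoungDiagram) (d j : ℕ) (hcard : μ.card = d + j)
    (hrow : μ.rowLen 0 = d) (hjd : j ≤ d) :
    ∏ c ∈ μ.cells, μ.hookLength c ≤ (d + j) ^ j * (2 * j + 1) ^ j * (d - j).factorial := by
  have hr1 : μ.rowLen 1 ≤ j := by have := μ.rowLen_add_rowLen_le; omega
  have hc0 : μ.colLen 0 ≤ j + 1 := by have := μ.rowLen_add_colLen_le; omega
  rw [← Finset.prod_filter_mul_prod_filter_not μ.cells (fun c => c.1 = 0)]
  have hfilter : μ.cells.filter (fun c => c.1 = 0) = μ.row 0 := rfl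
  -- first row product
  have hrow0 : ∏ c ∈ μ.row 0, μ.hookLength c
      = ∏ y ∈ Finset.range d, μ.hookLength (0, y) := by
    rw [row_eq_prod, hrow, Finset.singleton_product, Finset.prod_map]
    rfl
  have hsplit : ∏ y ∈ Finset.range d, μ.hookLength (0, y)
      = (∏ y ∈ Finset.Ico 0 j, μ.hookLength (0, y))
        * ∏ y ∈ Finset.Ico j d, μ.hookLength (0, y) := by
    rw [Finset.range_eq_Ico, Finset.prod_Ico_consecutive _ (Nat.zero_le j) hjd]
  have hIco1 : (∏ y ∈ Finset.Ico 0 j, μ.hookLength (0, y)) ≤ (d + j) ^ j := by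
    have := Finset.prod_le_pow_card (Finset.Ico 0 j) (fun y => μ.hookLength (0, y)) (d + j) ?_
    · simpa using this
    · intro y _
      have hcy : μ.colLen y ≤ j + 1 := le_trans (μ.colLen_anti 0 y (Nat.zero_le y)) hc0
      simp only [hookLength, hrow]
      omega
  have hIco2 : (∏ y ∈ Finset.Ico j d, μ.hookLength (0, y)) = (d - j).factorial := by
    have heq : ∀ y ∈ Finset.Ico j d, μ.hookLength (0, y) = d - y := by
      intro y hy
      rw [Finset.mem_Ico] at hy
      have hmem : ((0 : ℕ), y) ∈ μ := by rw [mem_iff_lt_rowLen, hrow]; exact hy.2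
      have h1 : 0 < μ.colLen y := by rw [← mem_iff_lt_colLen]; exact hmem
      have h2 : ¬ ((1 : ℕ), y) ∈ μ := by
        rw [mem_iff_lt_rowLen]
        omega
      rw [mem_iff_lt_colLen] at h2
      simp only [hookLength, hrow]
      omega
    rw [Finset.prod_congr rfl heq, Finset.prod_Ico_eq_prod_range]
    have : ∀ i ∈ Finset.range (d - j), d - (j + i) = (d - j) - i := by intros; omega
    rw [Finset.prod_congr rfl this, prod_sub_eq_factorial]
  -- the rest
  have hcardrest : (μ.cells.filter (fun c => ¬ c.1 = 0)).card = j := by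
    have h1 := Finset.card_filter_add_card_filter_not
      (s := μ.cells) (p := fun c => c.1 = 0)
    have h2 : (μ.cells.filter (fun c => c.1 = 0)).card = d := by
      rw [hfilter, ← rowLen_eq_card, hrow]
    have h3 : μ.cells.card = d + j := hcard
    omega
  have hrest : (∏ c ∈ μ.cells.filter (fun c => ¬ c.1 = 0), μ.hookLength c)
      ≤ (2 * j + 1) ^ j := by
    rw [← hcardrest]
    apply Finset.prod_le_pow_card
    intro c hc
    rw [Finset.mem_filter, mem_cells] at hc
    obtain ⟨hcμ, hc1⟩ := hc
    have hm1 : c.2 < μ.rowLen c.1 := by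
      rw [← mem_iff_lt_rowLen]; exact hcμ
    have hm2 : c.1 < μ.colLen c.2 := by
      rw [← mem_iff_lt_colLen]; exact hcμ
    have hrl : μ.rowLen c.1 ≤ j := le_trans (μ.rowLen_anti 1 c.1 (by omega)) hr1
    have hcl : μ.colLen c.2 ≤ j + 1 := le_trans (μ.colLen_anti 0 c.2 (Nat.zero_le _)) hc0
    simp only [hookLength]
    omega
  calc (∏ c ∈ μ.cells.filter (fun c => c.1 = 0), μ.hookLength c)
        * ∏ c ∈ μ.cells.filter (fun c => ¬ c.1 = 0), μ.hookLength c
      ≤ ((d + j) ^ j * (d - j).factorial) * (2 * j + 1) ^ j := by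
        apply Nat.mul_le_mul _ hrest
        rw [hfilter, hrow0, hsplit, hIco2]
        exact Nat.mul_le_mul_right _ hIco1
    _ = (d + j) ^ j * (2 * j + 1) ^ j * (d - j).factorial := by ring


lemma hookLength_pos (μ : YoungDiagram) {c : ℕ × ℕ} (hc : c ∈ μ.cells) :
    0 < μ.hookLength c := by
  rw [mem_cells] at hc
  have h1 : c.2 < μ.rowLen c.1 := by rw [← mem_iff_lt_rowLen]; exact hc
  have h2 : c.1 < μ.colLen c.2 := by rw [← mem_iff_lt_colLen]; exact hc
  simp only [hookLength]
  omega

lemma dimIrrep_lower (μ : YoungDiagram) (d j : ℕ) (hcard : μ.card = d + j)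
    (hrow : μ.rowLen 0 = d) (hjd : j ≤ d) :
    (d + 1 - j) ^ (2 * j) / ((d + j) ^ j * (2 * j + 1) ^ j) ≤ μ.dimIrrep := by
  have hP : 0 < ∏ c ∈ μ.cells, μ.hookLength c :=
    Finset.prod_pos fun c hc => μ.hookLength_pos hc
  have h1 : (d + j).factorial / ((d - j).factorial * ((d + j) ^ j * (2 * j + 1) ^ j))
      ≤ μ.dimIrrep := by
    unfold dimIrrep
    rw [hcard]
    apply Nat.div_le_div_left _ hP
    calc ∏ c ∈ μ.cells, μ.hookLength c
        ≤ (d + j) ^ j * (2 * j + 1) ^ j * (d - j).factorial :=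
          μ.prod_hook_le d j hcard hrow hjd
      _ = (d - j).factorial * ((d + j) ^ j * (2 * j + 1) ^ j) := by ring
  refine le_trans ?_ h1
  conv_rhs => rw [← Nat.div_div_eq_div_mul]
  have h2 : (d + j).factorial / (d - j).factorial = (d + j).descFactorial (2 * j) := by
    rw [Nat.descFactorial_eq_div (by omega : 2 * j ≤ d + j)]
    congr 2
    omega
  rw [h2]
  apply Nat.div_le_div_right
  have := Nat.pow_sub_le_descFactorial (d + j) (2 * j)
  have heq : d + j + 1 - 2 * j = d + 1 - j := by omega
  rwa [heq] at this

lemma rowcase (C : ℝ) (hC : 0 < C) (K k : ℕ) (n d j : ℕ) (μ : YoungDiagram)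
    (hcard : μ.card = n) (hrow : μ.rowLen 0 = d) (hdn : d ≤ n) (hj : n - d = j)
    (hjK : j ≤ K) (hjk : k < j)
    (hn : 4 ^ K * (2 * K + 1) ^ K * (⌈C⌉₊ + 1) + 4 * K + 1 ≤ n)
    (hdim : (μ.dimIrrep : ℝ) ≤ C * (n : ℝ) ^ k) : False := by
  have hM1 : 1 ≤ 4 ^ K * (2 * K + 1) ^ K * (⌈C⌉₊ + 1) := by
    have : 0 < 4 ^ K * (2 * K + 1) ^ K * (⌈C⌉₊ + 1) := by positivity
    omega
  have h4j : 4 * j + 1 ≤ n := by omega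
  have hjd : j ≤ d := by omega
  have hd : n = d + j := by omega
  set a := d + 1 - j with ha
  set Q := (d + j) ^ j * (2 * j + 1) ^ j with hQ
  set m := (⌈C⌉₊ + 1) * n ^ k with hm
  have hn1 : 1 ≤ n := by omega
  -- the key numeric inequality
  have hkey : 4 ^ j * (Q * m) ≤ n ^ (2 * j) := by
    have e1 : (d + j) ^ j = n ^ j := by rw [← hd]
    have e2 : (2 * j + 1) ^ j ≤ (2 * K + 1) ^ K :=
      le_trans (Nat.pow_le_pow_left (by omega) j) (Nat.pow_le_pow_right (by omega) hjK)
    have e3 : n ^ k ≤ n ^ (j - 1) := Nat.pow_le_pow_right hn1 (by omega)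
    have e4 : 4 ^ j ≤ 4 ^ K := Nat.pow_le_pow_right (by omega) hjK
    calc 4 ^ j * (Q * m)
        = (4 ^ j * (2 * j + 1) ^ j * (⌈C⌉₊ + 1)) * ((d + j) ^ j * n ^ k) := by
          rw [hQ, hm]; ring
      _ ≤ (4 ^ K * (2 * K + 1) ^ K * (⌈C⌉₊ + 1)) * (n ^ j * n ^ (j - 1)) := by
          apply Nat.mul_le_mul
          · exact Nat.mul_le_mul (Nat.mul_le_mul e4 e2) le_rfl
          · rw [e1]; exact Nat.mul_le_mul le_rfl e3
      _ ≤ n * (n ^ j * n ^ (j - 1)) := by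
          apply Nat.mul_le_mul_right
          omega
      _ = n ^ (1 + j + (j - 1)) := by rw [pow_add, pow_add, pow_one, mul_assoc]
      _ = n ^ (2 * j) := by congr 1; omega
  have h2a : n ≤ 2 * a := by omega
  have hQm : Q * m ≤ a ^ (2 * j) := by
    have h1 : n ^ (2 * j) ≤ (2 * a) ^ (2 * j) := Nat.pow_le_pow_left h2a _
    have h2 : (2 * a) ^ (2 * j) = 4 ^ j * a ^ (2 * j) := by
      rw [mul_pow, pow_mul]
      norm_num
    have := le_trans hkey (h1.trans_eq h2)
    exact Nat.le_of_mul_le_mul_left this (by positivity)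
  have hQpos : 0 < Q := by
    rw [hQ]
    have : 0 < d + j := by omega
    positivity
  have hmdim : m ≤ μ.dimIrrep := by
    refine le_trans ?_ (μ.dimIrrep_lower d j (by omega) hrow hjd)
    rw [Nat.le_div_iff_mul_le hQpos]
    calc m * Q = Q * m := by ring
      _ ≤ a ^ (2 * j) := hQm
  -- contradiction
  have hcast : ((⌈C⌉₊ : ℝ) + 1) * (n : ℝ) ^ k ≤ (μ.dimIrrep : ℝ) := by
    have := (Nat.cast_le (α := ℝ)).2 hmdim
    rw [hm] at this
    push_cast at this
    linarith
  have hnpos : (0 : ℝ) < (n : ℝ) ^ k := by positivity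
  have hCc : C < (⌈C⌉₊ : ℝ) + 1 := lt_of_le_of_lt (Nat.le_ceil C) (by linarith)
  nlinarith

end YoungDiagram

/-- If `μ` is a partition of `n` with `dim π_μ ≤ C·n^k` and
`d = max(first row length, first column length)` satisfies `n − d ≤ K`, then for all
sufficiently large `n` (given fixed `C`, `K`, `k`) one in fact has `d ≥ n − k`: if the
difference `n − d = j` were a fixed number `> k`, then by the hook length formula
`dim π_μ` would grow like a polynomial of degree `j > k` in `n`, contradicting
`dim π_μ ≤ C n^k`. -/
theorem stmt19 (C : ℝ) (hC : 0 < C) (K k : ℕ) :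
    ∃ N : ℕ, ∀ n : ℕ, N ≤ n → ∀ μ : YoungDiagram, μ.card = n →
      ∀ d : ℕ, d = max (μ.rowLen 0) (μ.colLen 0) →
      n - d ≤ K →
      (μ.dimIrrep : ℝ) ≤ C * (n : ℝ) ^ k →
      n - k ≤ d := by
  refine ⟨4 ^ K * (2 * K + 1) ^ K * (⌈C⌉₊ + 1) + 4 * K + 1, ?_⟩
  intro n hn μ hcard d hd hK hdim
  by_contra hcon
  push_neg at hcon
  have hjk : k < n - d := by omega
  rcases le_or_gt (μ.colLen 0) (μ.rowLen 0) with h | h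
  · have hdr : μ.rowLen 0 = d := by rw [hd, max_eq_left h]
    have hdn : d ≤ n := by rw [← hdr, ← hcard]; exact μ.rowLen_le_card 0
    exact YoungDiagram.rowcase C hC K k n d (n - d) μ hcard hdr hdn rfl hK hjk hn hdim
  · have hdr : μ.transpose.rowLen 0 = d := by
      rw [YoungDiagram.rowLen_transpose, hd, max_eq_right h.le]
    have hcard' : μ.transpose.card = n := by rw [YoungDiagram.card_transpose, hcard]
    have hdn : d ≤ n := by rw [← hdr, ← hcard']; exact μ.transpose.rowLen_le_card 0
    have hdim' : (μ.transpose.dimIrrep : ℝ) ≤ C * (n : ℝ) ^ k := by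
      rw [YoungDiagram.dimIrrep_transpose]; exact hdim
    exact YoungDiagram.rowcase C hC K k n d (n - d) μ.transpose hcard' hdr hdn rfl hK hjk hn hdim'
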